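/- Let R be a commutative ring and q, m, r ∈ R. For all natural numbers n and s: (m*[s]_q + r)^n = \sum_{k=0}^{n} m^k * W_{m,r,q}(n,k) * [s]_{q,k}, where [s]_{q,k} = \prod_{i=0}^{k-1} [s-i]_q is the q-falling factorial. -/

import Mathlib

/-- The q-integer [n]_q. -/
def qInt {R : Type*} [CommRing R] (q : R) (n : ℕ) : R :=
  ∑ i ∈ Finset.range n, q ^ i


/-- The (q,r)-Whitney numbers of the second kind. -/
def qWhitney {R : Type*} [CommRing R] (q m r : R) : ℕ → ℕ → R
  | 0, 0 => 1
  | 0, _ + 1 => 0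
  | n + 1, 0 => r * qWhitney q m r n 0
  | n + 1, k + 1 =>
      q ^ k * qWhitney q m r n k + (m * qInt q (k + 1) + r) * qWhitney q m r n (k + 1)

/-! Multiplication by `m [s]_q + r` acts on the basis `m^k [s]_{q,k}` exactly as the Whitney
recurrence prescribes, because `[s]_q = [k]_q + q^k [s-k]_q`. Expanding `(m [s]_q + r)^n` in that
basis by induction on `n`, the coefficients therefore satisfy the defining recurrence of
`qWhitney`. -/

open Finset

section
variable {R : Type*} [CommRing R]

@[simp]
lemma qInt_zero (q : R) : qInt q 0 = 0 := by
  simp [qInt]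

lemma qInt_add (q : R) (a b : ℕ) : qInt q (a + b) = qInt q a + q ^ a * qInt q b := by
  simp only [qInt, sum_range_add, pow_add, mul_sum]

def qDescFactorial (q : R) (s k : ℕ) : R :=
  ∏ i ∈ range k, qInt q (s - i)

lemma qDescFactorial_succ (q : R) (s k : ℕ) :
    qDescFactorial q s (k + 1) = qDescFactorial q s k * qInt q (s - k) :=
  prod_range_succ _ _

lemma qDescFactorial_eq_zero_of_lt (q : R) {s k : ℕ} (h : s < k) : qDescFactorial q s k = 0 :=
  prod_eq_zero (mem_range.mpr h) (by simp)

/-- The q-analogue of `s * s.descFactorial k = s.descFactorial (k + 1) + k * s.descFactorial k`. -/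
lemma qInt_mul_qDescFactorial (q : R) (s k : ℕ) :
    qInt q s * qDescFactorial q s k =
      q ^ k * qDescFactorial q s (k + 1) + qInt q k * qDescFactorial q s k := by
  rcases lt_or_ge s k with h | h
  · simp [qDescFactorial_eq_zero_of_lt q h, qDescFactorial_eq_zero_of_lt q (h.trans k.lt_succ_self)]
  · rw [qDescFactorial_succ, ← Nat.add_sub_cancel' h, qInt_add, Nat.add_sub_cancel_left]
    ring

lemma qWhitney_eq_zero_of_lt (q m r : R) : ∀ {n k : ℕ}, n < k → qWhitney q m r n k = 0
  | 0, _ + 1, _ => rfl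
  | n + 1, k + 1, h => by
    rw [qWhitney, qWhitney_eq_zero_of_lt q m r (by omega : n < k),
      qWhitney_eq_zero_of_lt q m r (by omega : n < k + 1)]
    ring

lemma pow_mul_eq_sum_qWhitney_mul (q m r a : R) (x : ℕ → R)
    (hx : ∀ k, a * x k = q ^ k * x (k + 1) + (m * qInt q k + r) * x k) (n : ℕ) :
    a ^ n * x 0 = ∑ k ∈ range (n + 1), qWhitney q m r n k * x k := by
  induction n with
  | zero => simp [qWhitney]
  | succ n ih =>
    set W := qWhitney q m r n
    have hlast : W (n + 1) = 0 := qWhitney_eq_zero_of_lt q m r n.lt_succ_self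
    calc a ^ (n + 1) * x 0 = ∑ k ∈ range (n + 1), W k * (a * x k) := by
          rw [pow_succ', mul_assoc, ih, mul_sum]; simp only [mul_left_comm]
      _ = ∑ k ∈ range (n + 1), q ^ k * W k * x (k + 1)
          + ∑ k ∈ range (n + 1 + 1), (m * qInt q k + r) * W k * x k := by
          rw [sum_range_succ _ (n + 1), hlast, mul_zero, zero_mul, add_zero, ← sum_add_distrib]
          exact sum_congr rfl fun k _ => by rw [hx]; ring
      _ = ∑ k ∈ range (n + 1 + 1), qWhitney q m r (n + 1) k * x k := by
          rw [sum_range_succ' _ (n + 1), sum_range_succ' (fun k => qWhitney q m r (n + 1) k * x k),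
            ← add_assoc, ← sum_add_distrib]
          simp only [qWhitney, qInt_zero]
          congr 1
          · exact sum_congr rfl fun k _ => by ring
          · ring

end

/-- Expansion of (m [s]_q + r)^n via (q,r)-Whitney numbers and q-falling factorials. -/
theorem qWhitney_expansion {R : Type*} [CommRing R] (q m r : R) (n s : ℕ) :
    (m * qInt q s + r) ^ n =
      ∑ k ∈ Finset.range (n + 1),
        m ^ k * qWhitney q m r n k * ∏ i ∈ Finset.range k, qInt q (s - i) := by
  have hx : ∀ k, (m * qInt q s + r) * (m ^ k * qDescFactorial q s k) =
      q ^ k * (m ^ (k + 1) * qDescFactorial q s (k + 1)) +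
        (m * qInt q k + r) * (m ^ k * qDescFactorial q s k) := by
    intro k
    linear_combination m ^ (k + 1) * qInt_mul_qDescFactorial q s k
  have hexpand := pow_mul_eq_sum_qWhitney_mul q m r _ _ hx n
  simp only [pow_zero, qDescFactorial, prod_range_zero, mul_one] at hexpand
  rw [hexpand]
  exact sum_congr rfl fun k _ => by ring
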